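/- arXiv:1010.3756 — 3 statements merged into one kernel-verified Lean document; each statement's English description precedes it below -/
import Mathlib

section
/- Consider the tamed Euler recursion Y_{n+1} = Y_n + (T/N)μ(Y_n)/(1 + (T/N)‖μ(Y_n)‖) + σ(Y_n)ΔW_n in ℝᵈ, where μ is one-sided Lipschitz with constant c, has polynomially growing derivative, and σ is c-Lipschitz. Set λ := (1 + 2c + T + ‖μ(0)‖ + ‖σ(0)‖)⁴. Then on the event where 1 ≤ ‖Y_n‖ ≤ N^{1/(2c)}, one has the pathwise estimate ‖Y_{n+1}‖² ≤ ‖Y_n‖² · exp( 2λ/N + 2λ‖ΔW_n‖² + 2·1_{‖Y_n‖≥1}⟨Y_n/‖Y_n‖, (σ(Y_n)/‖Y_n‖)ΔW_n⟩ ). -/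
/-!
Expanding the square,
`‖Y + τ μ(Y) + σ(Y)ΔW‖² = ‖Y‖² + 2τ⟪Y, μ(Y)⟫ + 2⟪Y, σ(Y)ΔW⟫ + ‖τ μ(Y) + σ(Y)ΔW‖²`. For `‖Y‖ ≥ 1`, one-sided Lipschitz continuity gives `⟪Y, μ(Y)⟫ ≤ (c + ‖μ 0‖)‖Y‖²`, Lipschitz
continuity of `σ` gives `‖σ(Y)ΔW‖ ≤ (c + ‖σ 0‖)‖Y‖‖ΔW‖`, and the mean value theorem gives
`‖μ(Y)‖ ≤ (2c + ‖μ 0‖)‖Y‖^c ‖Y‖`. The taming factor is at most `T/N`, and the restriction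
`‖Y‖ ≤ N^(1/(2c))` means `‖Y‖^(2c) ≤ N`, so `τ²‖μ(Y)‖²` is still of order `‖Y‖²/N`.
All constants are absorbed into `λ`, and `1 + x ≤ exp x` finishes the estimate.
-/

open Real
open scoped InnerProductSpace

section Growth

variable {E F : Type*} [NormedAddCommGroup E] [NormedSpace ℝ E]
  [NormedAddCommGroup F] [NormedSpace ℝ F]

theorem norm_le_of_norm_fderiv_le_one_add_rpow {f : E → F} (hf : Differentiable ℝ f) {C p : ℝ}
    (hC : 0 ≤ C) (hp : 0 ≤ p) (hf' : ∀ x, ‖fderiv ℝ f x‖ ≤ C * (1 + ‖x‖ ^ p)) {x : E}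
    (hx : 1 ≤ ‖x‖) : ‖f x‖ ≤ (2 * C + ‖f 0‖) * ‖x‖ ^ p * ‖x‖ := by
  have hmvt : ‖f x - f 0‖ ≤ C * (1 + ‖x‖ ^ p) * ‖x - 0‖ := by
    refine Convex.norm_image_sub_le_of_norm_fderiv_le (fun y _ => hf y) (fun y hy => ?_)
      (convex_closedBall 0 ‖x‖) (by simp) (by simp)
    have hy : ‖y‖ ≤ ‖x‖ := by simpa using hy
    have := rpow_le_rpow (norm_nonneg y) hy hp
    exact (hf' y).trans (by gcongr)
  have hxp : 1 ≤ ‖x‖ ^ p := one_le_rpow hx hp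
  have hxx : ‖x‖ ≤ ‖x‖ ^ p * ‖x‖ := le_mul_of_one_le_left (norm_nonneg x) hxp
  rw [sub_zero] at hmvt
  have := norm_sub_norm_le (f x) (f 0)
  nlinarith [mul_le_mul_of_nonneg_left hxx hC,
    mul_le_mul_of_nonneg_left (hxp.trans (le_mul_of_one_le_right (by positivity) hx))
      (norm_nonneg (f 0))]

end Growth

section RealInner

variable {E : Type*} [NormedAddCommGroup E] [InnerProductSpace ℝ E]

theorem real_inner_self_apply_le_of_one_sided_lipschitz {f : E → E} {c : ℝ}
    (hf : ∀ x y, ⟪x - y, f x - f y⟫_ℝ ≤ c * ‖x - y‖ ^ 2) {x : E} (hx : 1 ≤ ‖x‖) :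
    ⟪x, f x⟫_ℝ ≤ (c + ‖f 0‖) * ‖x‖ ^ 2 := by
  have h := hf x 0
  rw [sub_zero, inner_sub_right] at h
  have := real_inner_le_norm x (f 0)
  nlinarith [mul_le_mul_of_nonneg_left hx (mul_nonneg (norm_nonneg x) (norm_nonneg (f 0)))]

theorem norm_add_add_sq_le_mul_exp {Y u b : E} {s t : ℝ}
    (hu : ⟪Y, u⟫_ℝ + ‖u‖ ^ 2 ≤ s * ‖Y‖ ^ 2) (hb : ‖b‖ ^ 2 ≤ t * ‖Y‖ ^ 2) :
    ‖Y + u + b‖ ^ 2 ≤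
      ‖Y‖ ^ 2 * exp (2 * s + 2 * t + 2 * ⟪‖Y‖⁻¹ • Y, ‖Y‖⁻¹ • b⟫_ℝ) := by
  have hinner : ‖Y‖ ^ 2 * ⟪‖Y‖⁻¹ • Y, ‖Y‖⁻¹ • b⟫_ℝ = ⟪Y, b⟫_ℝ := by
    rcases eq_or_ne ‖Y‖ 0 with h | h
    · simp [norm_eq_zero.mp h]
    · rw [real_inner_smul_left, real_inner_smul_right]
      field_simp
  have hub : ‖u + b‖ ^ 2 ≤ 2 * ‖u‖ ^ 2 + 2 * ‖b‖ ^ 2 := by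
    nlinarith [norm_add_le u b, norm_nonneg (u + b), sq_nonneg (‖u‖ - ‖b‖)]
  calc ‖Y + u + b‖ ^ 2 = ‖Y‖ ^ 2 + 2 * (⟪Y, u⟫_ℝ + ⟪Y, b⟫_ℝ) + ‖u + b‖ ^ 2 := by
        rw [add_assoc, norm_add_sq_real, inner_add_right]
    _ ≤ ‖Y‖ ^ 2 * (1 + (2 * s + 2 * t + 2 * ⟪‖Y‖⁻¹ • Y, ‖Y‖⁻¹ • b⟫_ℝ)) := by
        nlinarith
    _ ≤ _ := by gcongr; linarith [add_one_le_exp (2 * s + 2 * t + 2 * ⟪‖Y‖⁻¹ • Y, ‖Y‖⁻¹ • b⟫_ℝ)]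

theorem real_inner_smul_add_norm_smul_sq_le {Y a : E} {τ T N α β M : ℝ} (hτ : 0 ≤ τ)
    (hτN : τ ≤ T / N) (hα : 0 ≤ α) (hYa : ⟪Y, a⟫_ℝ ≤ α * ‖Y‖ ^ 2)
    (ha : ‖a‖ ≤ β * M * ‖Y‖) (hM : M ^ 2 ≤ N) :
    ⟪Y, τ • a⟫_ℝ + ‖τ • a‖ ^ 2 ≤ (T * α + T ^ 2 * β ^ 2) / N * ‖Y‖ ^ 2 := by
  have ha2 : ‖a‖ ^ 2 ≤ β ^ 2 * N * ‖Y‖ ^ 2 := by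
    calc ‖a‖ ^ 2 ≤ (β * M * ‖Y‖) ^ 2 := pow_le_pow_left₀ (norm_nonneg a) ha 2
      _ = β ^ 2 * M ^ 2 * ‖Y‖ ^ 2 := by ring
      _ ≤ β ^ 2 * N * ‖Y‖ ^ 2 := by gcongr
  have hτ2 : τ ^ 2 ≤ (T / N) ^ 2 := pow_le_pow_left₀ hτ hτN 2
  rw [real_inner_smul_right, norm_smul, mul_pow, Real.norm_eq_abs, sq_abs]
  calc τ * ⟪Y, a⟫_ℝ + τ ^ 2 * ‖a‖ ^ 2
      ≤ T / N * (α * ‖Y‖ ^ 2) + (T / N) ^ 2 * (β ^ 2 * N * ‖Y‖ ^ 2) := by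
        gcongr ?_ + ?_
        · exact (mul_le_mul_of_nonneg_left hYa hτ).trans (by gcongr)
        · exact mul_le_mul hτ2 ha2 (by positivity) (by positivity)
    _ = _ := by
        rcases eq_or_ne N 0 with h | h
        · simp [h]
        · field_simp

end RealInner

theorem norm_apply_le_of_lipschitz {𝕜 E F G : Type*} [NontriviallyNormedField 𝕜]
    [SeminormedAddCommGroup E] [SeminormedAddCommGroup F] [NormedSpace 𝕜 F]
    [SeminormedAddCommGroup G] [NormedSpace 𝕜 G]
    {σ : E → F →L[𝕜] G} {c : ℝ} (hσ : ∀ x y, ‖σ x - σ y‖ ≤ c * ‖x - y‖) {x : E}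
    (hx : 1 ≤ ‖x‖) (v : F) : ‖σ x v‖ ≤ (c + ‖σ 0‖) * ‖x‖ * ‖v‖ := by
  have h := hσ x 0
  rw [sub_zero] at h
  have := norm_sub_norm_le (σ x) (σ 0)
  have hσx : ‖σ x‖ ≤ (c + ‖σ 0‖) * ‖x‖ := by nlinarith [norm_nonneg (σ 0)]
  exact ((σ x).le_opNorm v).trans (by gcongr)

theorem rpow_sq_le_of_le_rpow_one_div {x N c : ℝ} (hx : 0 ≤ x) (hN : 0 ≤ N) (hc : 0 < c)
    (h : x ≤ N ^ (1 / (2 * c))) : (x ^ c) ^ 2 ≤ N := by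
  rw [one_div, le_rpow_inv_iff_of_pos hx hN (by positivity)] at h
  rwa [← rpow_mul_natCast hx, mul_comm]

theorem tamed_constants_le {T c A B : ℝ} (hT : 0 ≤ T) (hc : 0 ≤ c) (hA : 0 ≤ A) (hB : 0 ≤ B) :
    T * (c + A) + T ^ 2 * (2 * c + A) ^ 2 ≤ (1 + 2 * c + T + A + B) ^ 4 ∧
      (c + B) ^ 2 ≤ (1 + 2 * c + T + A + B) ^ 4 := by
  set S := 1 + 2 * c + T + A + B
  have hS : 1 ≤ S := by linarith
  have hS24 : S ^ 2 ≤ S ^ 4 := pow_le_pow_right₀ hS (by norm_num)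
  have hTS : 4 * (T * (2 * c + A)) ≤ S ^ 2 := by nlinarith [sq_nonneg (T - (2 * c + A))]
  constructor
  · nlinarith [mul_le_mul_of_nonneg_left (show c + A ≤ 2 * c + A by linarith) hT,
      pow_le_pow_left₀ (by positivity) hTS 2]
  · nlinarith

theorem tamed_euler_pathwise_growth_general
    (d m : ℕ) (T c : ℝ) (hT : 0 < T) (hc : 0 < c) (N : ℕ)
    (μ : EuclideanSpace ℝ (Fin d) → EuclideanSpace ℝ (Fin d))
    (hC1 : ContDiff ℝ 1 μ)
    (hμ' : ∀ x, ‖fderiv ℝ μ x‖ ≤ c * (1 + ‖x‖ ^ c))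
    (hμos : ∀ x y, (inner ℝ (x - y) (μ x - μ y) : ℝ) ≤ c * ‖x - y‖^2)
    (σ : EuclideanSpace ℝ (Fin d) → (EuclideanSpace ℝ (Fin m) →L[ℝ] EuclideanSpace ℝ (Fin d)))
    (hσ : ∀ x y, ‖σ x - σ y‖ ≤ c * ‖x - y‖)
    (lam : ℝ) (hlam : lam = (1 + 2*c + T + ‖μ 0‖ + ‖σ 0‖)^4)
    (Y Ynext : EuclideanSpace ℝ (Fin d)) (ΔW : EuclideanSpace ℝ (Fin m))
    (hrec : Ynext = Y + ((T / N) / (1 + (T / N) * ‖μ Y‖)) • μ Y + σ Y ΔW)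
    (hY1 : 1 ≤ ‖Y‖) (hYN : ‖Y‖ ≤ (N : ℝ) ^ (1 / (2 * c))) :
    ‖Ynext‖^2 ≤ ‖Y‖^2 * Real.exp (2 * lam / N + 2 * lam * ‖ΔW‖^2
      + 2 * (if 1 ≤ ‖Y‖ then (inner ℝ (‖Y‖⁻¹ • Y) (‖Y‖⁻¹ • (σ Y ΔW)) : ℝ) else 0)) := by
  obtain ⟨hlamμ, hlamσ⟩ := tamed_constants_le hT.le hc.le (norm_nonneg (μ 0)) (norm_nonneg (σ 0))
  rw [← hlam] at hlamμ hlamσ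
  have hτ : 0 ≤ (T / N) / (1 + (T / N) * ‖μ Y‖) := by positivity
  have hτN : (T / N) / (1 + (T / N) * ‖μ Y‖) ≤ T / N :=
    div_le_self (by positivity) (le_add_of_nonneg_right (by positivity))
  have hdrift := real_inner_smul_add_norm_smul_sq_le hτ hτN (by positivity)
    (real_inner_self_apply_le_of_one_sided_lipschitz hμos hY1)
    (norm_le_of_norm_fderiv_le_one_add_rpow (hC1.differentiable one_ne_zero) hc.le hc.le hμ' hY1)
    (rpow_sq_le_of_le_rpow_one_div (norm_nonneg Y) N.cast_nonneg hc hYN)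
  have hdiffusion : ‖σ Y ΔW‖ ^ 2 ≤ lam * ‖ΔW‖ ^ 2 * ‖Y‖ ^ 2 := by
    calc ‖σ Y ΔW‖ ^ 2 ≤ ((c + ‖σ 0‖) * ‖Y‖ * ‖ΔW‖) ^ 2 :=
          pow_le_pow_left₀ (norm_nonneg _) (norm_apply_le_of_lipschitz hσ hY1 ΔW) 2
      _ = (c + ‖σ 0‖) ^ 2 * ‖ΔW‖ ^ 2 * ‖Y‖ ^ 2 := by ring
      _ ≤ lam * ‖ΔW‖ ^ 2 * ‖Y‖ ^ 2 := by gcongr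
  have hstep := norm_add_add_sq_le_mul_exp
    (hdrift.trans (by gcongr : _ ≤ lam / N * ‖Y‖ ^ 2)) hdiffusion
  rwa [if_pos hY1, hrec, mul_div_assoc, mul_assoc 2 lam]

theorem tamed_euler_pathwise_growth
    (d m : ℕ) (T c : ℝ) (hT : 0 < T) (hc : 0 < c) (N : ℕ) (hN : 0 < N)
    (μ : EuclideanSpace ℝ (Fin d) → EuclideanSpace ℝ (Fin d))
    (hC1 : ContDiff ℝ 1 μ)
    (hμ' : ∀ x, ‖fderiv ℝ μ x‖ ≤ c * (1 + ‖x‖ ^ c))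
    (hμos : ∀ x y, (inner ℝ (x - y) (μ x - μ y) : ℝ) ≤ c * ‖x - y‖^2)
    (σ : EuclideanSpace ℝ (Fin d) → (EuclideanSpace ℝ (Fin m) →L[ℝ] EuclideanSpace ℝ (Fin d)))
    (hσ : ∀ x y, ‖σ x - σ y‖ ≤ c * ‖x - y‖)
    (lam : ℝ) (hlam : lam = (1 + 2*c + T + ‖μ 0‖ + ‖σ 0‖)^4)
    (Y Ynext : EuclideanSpace ℝ (Fin d)) (ΔW : EuclideanSpace ℝ (Fin m))
    (hrec : Ynext = Y + ((T / N) / (1 + (T / N) * ‖μ Y‖)) • μ Y + σ Y ΔW)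
    (hY1 : 1 ≤ ‖Y‖) (hYN : ‖Y‖ ≤ (N : ℝ) ^ (1 / (2 * c))) :
    ‖Ynext‖^2 ≤ ‖Y‖^2 * Real.exp (2 * lam / N + 2 * lam * ‖ΔW‖^2
      + 2 * (if 1 ≤ ‖Y‖ then (inner ℝ (‖Y‖⁻¹ • Y) (‖Y‖⁻¹ • (σ Y ΔW)) : ℝ) else 0)) :=
  tamed_euler_pathwise_growth_general d m T c hT hc N μ hC1 hμ' hμos σ hσ lam hlam Y Ynext ΔW hrec
    hY1 hYN
end

section
/- Dominator lemma: let Y_n^N be the tamed Euler scheme started at ξ, let α_n^N := 1_{‖Y_n^N‖≥1}⟨Y_n^N/‖Y_n^N‖, (σ(Y_n^N)/‖Y_n^N‖)ΔW_n^N⟩, let D_n^N := (λ + ‖ξ‖)·exp(λ + sup_{u∈{0,…,n}} ∑_{k=u}^{n-1}[λ‖ΔW_k^N‖² + α_k^N]), and let Ω_n^N be the event that D_k^N ≤ N^{1/(2c)} and ‖ΔW_k^N‖ ≤ 1 for all k ∈ {0,…,n-1}. Then pathwise 1_{Ω_n^N}‖Y_n^N‖ ≤ D_n^N for all n ∈ {0,1,…,N}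 and all N ∈ ℕ. -/
/-!
By induction on `n`, `‖Y n‖ ≤ (λ + ‖ξ‖) e · exp (n κ / N + S n)` with
`κ = T (c + ‖μ 0‖) + T² (‖μ 0‖ + 2c)²` and `S n` the largest suffix sum of the exponents
`λ ‖ΔW k‖² + α k`, `k < n`. If `‖Y n‖ ≥ 1`, expanding `‖Y (n+1)‖²` gives
`‖Y (n+1)‖ ≤ ‖Y n‖ exp (κ / N + λ ‖ΔW n‖² + α n)`: the one-sided Lipschitz bound controls
`⟪Y n, μ (Y n)⟫`, and on `Ω_n^N` the polynomial growth of `μ` is paid for by `‖Y n‖ ^ (2c) ≤ N`.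
If `‖Y n‖ < 1`, the tamed drift has norm at most `1`, so `‖Y (n+1)‖ ≤ 2 + c + ‖σ 0‖` and the
estimate restarts; the worst restart time is the supremum over `u` in `D`. Finally `1 + κ ≤ λ`.
-/

open Finset Real
open scoped RealInnerProductSpace

section

variable {E : Type*} [NormedAddCommGroup E] [InnerProductSpace ℝ E]
  {F : Type*} [NormedAddCommGroup F] [NormedSpace ℝ F]
  {G : Type*} [NormedAddCommGroup G] [NormedSpace ℝ G]

noncomputable def tamed (h : ℝ) (y : F) : F := (h / (1 + h * ‖y‖)) • y

lemma norm_tamed {h : ℝ} (hh : 0 ≤ h) (y : F) : ‖tamed h y‖ = h * ‖y‖ / (1 + h * ‖y‖) := by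
  rw [tamed, norm_smul, norm_of_nonneg (by positivity), div_mul_eq_mul_div]

lemma norm_tamed_le_one {h : ℝ} (hh : 0 ≤ h) (y : F) : ‖tamed h y‖ ≤ 1 := by
  rw [norm_tamed hh, div_le_one (by positivity)]
  linarith

lemma norm_tamed_le {h : ℝ} (hh : 0 ≤ h) (y : F) : ‖tamed h y‖ ≤ h * ‖y‖ := by
  rw [norm_tamed hh]
  exact div_le_self (by positivity) (by linarith [mul_nonneg hh (norm_nonneg y)])

lemma inner_tamed_le {h B : ℝ} {x y : E} (hh : 0 ≤ h) (hB : 0 ≤ B) (hxy : ⟪x, y⟫ ≤ B) :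
    ⟪x, tamed h y⟫ ≤ h * B := by
  have hθ : 0 ≤ h / (1 + h * ‖y‖) := by positivity
  have hθh : h / (1 + h * ‖y‖) ≤ h :=
    div_le_self hh (by linarith [mul_nonneg hh (norm_nonneg y)])
  rw [tamed, real_inner_smul_right]
  calc h / (1 + h * ‖y‖) * ⟪x, y⟫ ≤ h / (1 + h * ‖y‖) * B := mul_le_mul_of_nonneg_left hxy hθ
    _ ≤ h * B := mul_le_mul_of_nonneg_right hθh hB

lemma norm_le_norm_zero_add_of_norm_sub_le {X Y : Type*} [SeminormedAddGroup X]
    [SeminormedAddGroup Y] {f : X → Y} {c : ℝ}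
    (hf : ∀ x y, ‖f x - f y‖ ≤ c * ‖x - y‖) (x : X) : ‖f x‖ ≤ ‖f 0‖ + c * ‖x‖ := by
  simpa using (norm_le_norm_add_norm_sub' (f x) (f 0)).trans (by simpa using hf x 0)

lemma norm_le_norm_zero_add_of_norm_fderiv_le {f : F → G} (hf : Differentiable ℝ f) {x : F}
    {C : ℝ} (hC : ∀ y, ‖y‖ ≤ ‖x‖ → ‖fderiv ℝ f y‖ ≤ C) : ‖f x‖ ≤ ‖f 0‖ + C * ‖x‖ := by
  have hmv := (convex_closedBall (0 : F) ‖x‖).norm_image_sub_le_of_norm_fderiv_le (x := 0) (y := x)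
    (fun y _ => hf y) (fun y hy => hC y (by simpa using hy))
    (Metric.mem_closedBall_self (norm_nonneg x)) (by simp)
  rw [sub_zero] at hmv
  linarith [norm_le_norm_add_norm_sub' (f x) (f 0)]

lemma norm_le_mul_rpow_mul_of_norm_fderiv_le {f : F → G} (hf : Differentiable ℝ f) {c : ℝ}
    (hc : 0 ≤ c) (hf' : ∀ x, ‖fderiv ℝ f x‖ ≤ c * (1 + ‖x‖ ^ c)) {x : F} (hx : 1 ≤ ‖x‖) :
    ‖f x‖ ≤ (‖f 0‖ + 2 * c) * ‖x‖ ^ c * ‖x‖ := by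
  have hgrowth : ‖f x‖ ≤ ‖f 0‖ + c * (1 + ‖x‖ ^ c) * ‖x‖ :=
    norm_le_norm_zero_add_of_norm_fderiv_le hf fun y hy =>
      (hf' y).trans (by gcongr)
  have hxc : 1 ≤ ‖x‖ ^ c := one_le_rpow hx hc
  nlinarith [mul_nonneg (mul_nonneg hc (sub_nonneg.mpr hxc)) (norm_nonneg x),
    mul_nonneg (norm_nonneg (f 0)) (sub_nonneg.mpr (one_le_mul_of_one_le_of_one_le hxc hx))]

lemma inner_apply_le_of_inner_sub_le {f : E → E} {c : ℝ}
    (hf : ∀ x y, ⟪x - y, f x - f y⟫ ≤ c * ‖x - y‖ ^ 2) {x : E} (hx : 1 ≤ ‖x‖) :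
    ⟪x, f x⟫ ≤ (c + ‖f 0‖) * ‖x‖ ^ 2 := by
  have h0 := hf x 0
  simp only [sub_zero, inner_sub_right] at h0
  have h1 : ⟪x, f 0⟫ ≤ ‖x‖ * ‖f 0‖ := real_inner_le_norm x (f 0)
  nlinarith [mul_nonneg (norm_nonneg (f 0)) (by nlinarith : (0 : ℝ) ≤ ‖x‖ ^ 2 - ‖x‖)]

lemma inner_inv_norm_smul_mul_sq (x y : E) : ⟪‖x‖⁻¹ • x, ‖x‖⁻¹ • y⟫ * ‖x‖ ^ 2 = ⟪x, y⟫ := by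
  rw [real_inner_smul_left, real_inner_smul_right]
  rcases eq_or_ne ‖x‖ 0 with hx | hx
  · simp [norm_eq_zero.mp hx]
  · field_simp

lemma norm_add_add_le_mul_exp {x v w : E} {a b e β : ℝ}
    (hv : ⟪x, v⟫ ≤ a * ‖x‖ ^ 2) (hv2 : ‖v‖ ^ 2 ≤ b * ‖x‖ ^ 2)
    (hw : ⟪x, w⟫ ≤ β * ‖x‖ ^ 2) (hw2 : ‖w‖ ^ 2 ≤ e * ‖x‖ ^ 2) :
    ‖x + v + w‖ ≤ ‖x‖ * exp (a + b + e + β) := by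
  have hvw : ‖v + w‖ ^ 2 ≤ 2 * ‖v‖ ^ 2 + 2 * ‖w‖ ^ 2 := by
    nlinarith [norm_add_le v w, norm_nonneg (v + w), sq_nonneg (‖v‖ - ‖w‖)]
  have hsq : ‖x + v + w‖ ^ 2 ≤ ‖x‖ ^ 2 * (2 * (a + b + e + β) + 1) := by
    rw [add_assoc, norm_add_sq_real, inner_add_right]
    nlinarith
  have hexp : ‖x‖ ^ 2 * (2 * (a + b + e + β) + 1) ≤ (‖x‖ * exp (a + b + e + β)) ^ 2 := by
    rw [mul_pow, ← exp_nat_mul]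
    push_cast
    exact mul_le_mul_of_nonneg_left (add_one_le_exp _) (sq_nonneg _)
  exact (pow_le_pow_iff_left₀ (norm_nonneg _) (by positivity) two_ne_zero).mp (hsq.trans hexp)

variable {μ : E → E} {σ : E → F →L[ℝ] E} {T c N lam : ℝ}

lemma sq_norm_tamed_le {x : E} (hT : 0 ≤ T) (hc : 0 < c) (hN : 0 < N) {A : ℝ}
    (hμx : ‖μ x‖ ≤ A * ‖x‖ ^ c * ‖x‖) (hxN : ‖x‖ ≤ N ^ (1 / (2 * c))) :
    ‖tamed (T / N) (μ x)‖ ^ 2 ≤ T ^ 2 * A ^ 2 / N * ‖x‖ ^ 2 := by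
  have hxc : (‖x‖ ^ c) ^ 2 ≤ N := by
    rw [← rpow_natCast, ← rpow_mul (norm_nonneg x), mul_comm]
    push_cast
    rwa [one_div, le_rpow_inv_iff_of_pos (norm_nonneg x) hN.le (by positivity)] at hxN
  have hnorm : ‖tamed (T / N) (μ x)‖ ≤ T / N * (A * ‖x‖ ^ c * ‖x‖) :=
    (norm_tamed_le (by positivity) _).trans (by gcongr)
  calc ‖tamed (T / N) (μ x)‖ ^ 2 ≤ (T / N * (A * ‖x‖ ^ c * ‖x‖)) ^ 2 := by gcongr
    _ = T ^ 2 * A ^ 2 / N ^ 2 * (‖x‖ ^ c) ^ 2 * ‖x‖ ^ 2 := by ring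
    _ ≤ T ^ 2 * A ^ 2 / N ^ 2 * N * ‖x‖ ^ 2 := by gcongr
    _ = T ^ 2 * A ^ 2 / N * ‖x‖ ^ 2 := by field_simp

lemma norm_add_tamed_add_le_of_one_le_norm {x : E} {δ : F} (hT : 0 ≤ T) (hc : 0 < c) (hN : 0 < N)
    (hμ : Differentiable ℝ μ) (hμ' : ∀ x, ‖fderiv ℝ μ x‖ ≤ c * (1 + ‖x‖ ^ c))
    (hμos : ∀ x y, ⟪x - y, μ x - μ y⟫ ≤ c * ‖x - y‖ ^ 2)
    (hσ : ∀ x y, ‖σ x - σ y‖ ≤ c * ‖x - y‖) (hlam : (c + ‖σ 0‖) ^ 2 ≤ lam)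
    (hxN : ‖x‖ ≤ N ^ (1 / (2 * c))) (hx : 1 ≤ ‖x‖) :
    ‖x + tamed (T / N) (μ x) + σ x δ‖ ≤
      ‖x‖ * exp ((T * (c + ‖μ 0‖) + T ^ 2 * (‖μ 0‖ + 2 * c) ^ 2) / N
        + (lam * ‖δ‖ ^ 2 + ⟪‖x‖⁻¹ • x, ‖x‖⁻¹ • σ x δ⟫)) := by
  have hv : ⟪x, tamed (T / N) (μ x)⟫ ≤ T / N * (c + ‖μ 0‖) * ‖x‖ ^ 2 := by
    rw [mul_assoc]
    exact inner_tamed_le (by positivity) (by positivity) (inner_apply_le_of_inner_sub_le hμos hx)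
  have hv2 := sq_norm_tamed_le hT hc hN
    (norm_le_mul_rpow_mul_of_norm_fderiv_le hμ hc.le hμ' hx) hxN
  have hσx : ‖σ x‖ ≤ (c + ‖σ 0‖) * ‖x‖ := by
    nlinarith [norm_le_norm_zero_add_of_norm_sub_le hσ x, norm_nonneg (σ 0)]
  have hw2 : ‖σ x δ‖ ^ 2 ≤ lam * ‖δ‖ ^ 2 * ‖x‖ ^ 2 :=
    calc ‖σ x δ‖ ^ 2 ≤ ((c + ‖σ 0‖) * ‖x‖ * ‖δ‖) ^ 2 := by
          gcongr; exact (σ x).le_opNorm δ |>.trans (by gcongr)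
      _ = (c + ‖σ 0‖) ^ 2 * ‖δ‖ ^ 2 * ‖x‖ ^ 2 := by ring
      _ ≤ lam * ‖δ‖ ^ 2 * ‖x‖ ^ 2 := by gcongr
  calc _ ≤ _ := norm_add_add_le_mul_exp hv hv2 (inner_inv_norm_smul_mul_sq x (σ x δ)).ge hw2
    _ = _ := by congr 2; field_simp; ring

lemma norm_add_tamed_add_le_of_norm_lt_one {x y : E} {δ : F} {h : ℝ} (hh : 0 ≤ h) (hc : 0 ≤ c)
    (hσ : ∀ x y, ‖σ x - σ y‖ ≤ c * ‖x - y‖) (hx : ‖x‖ < 1) (hδ : ‖δ‖ ≤ 1) :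
    ‖x + tamed h y + σ x δ‖ ≤ 2 + c + ‖σ 0‖ := by
  have hσx : ‖σ x δ‖ ≤ ‖σ 0‖ + c :=
    calc ‖σ x δ‖ ≤ (‖σ 0‖ + c * ‖x‖) * ‖δ‖ :=
          (σ x).le_opNorm δ |>.trans
            (by gcongr; exact norm_le_norm_zero_add_of_norm_sub_le hσ x)
      _ ≤ (‖σ 0‖ + c * 1) * 1 := by gcongr
      _ = ‖σ 0‖ + c := by ring
  linarith [norm_add₃_le (a := x) (b := tamed h y) (c := σ x δ), norm_tamed_le_one hh y]

lemma norm_add_tamed_add_le {x : E} {δ : F} (hT : 0 ≤ T) (hc : 0 < c) (hN : 0 < N)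
    (hμ : Differentiable ℝ μ) (hμ' : ∀ x, ‖fderiv ℝ μ x‖ ≤ c * (1 + ‖x‖ ^ c))
    (hμos : ∀ x y, ⟪x - y, μ x - μ y⟫ ≤ c * ‖x - y‖ ^ 2)
    (hσ : ∀ x y, ‖σ x - σ y‖ ≤ c * ‖x - y‖) (hlam : (c + ‖σ 0‖) ^ 2 ≤ lam)
    (hxN : ‖x‖ ≤ N ^ (1 / (2 * c))) (hδ : ‖δ‖ ≤ 1) :
    ‖x + tamed (T / N) (μ x) + σ x δ‖ ≤ max (2 + c + ‖σ 0‖)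
      (‖x‖ * exp ((T * (c + ‖μ 0‖) + T ^ 2 * (‖μ 0‖ + 2 * c) ^ 2) / N
        + (lam * ‖δ‖ ^ 2 + if 1 ≤ ‖x‖ then ⟪‖x‖⁻¹ • x, ‖x‖⁻¹ • σ x δ⟫ else 0))) := by
  by_cases hx : 1 ≤ ‖x‖
  · rw [if_pos hx]
    exact le_max_of_le_right
      (norm_add_tamed_add_le_of_one_le_norm hT hc hN hμ hμ' hμos hσ hlam hxN hx)
  · exact le_max_of_le_left
      (norm_add_tamed_add_le_of_norm_lt_one (by positivity) hc.le hσ (not_le.mp hx) hδ)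

end

def maxSuffixSum (g : ℕ → ℝ) (n : ℕ) : ℝ :=
  (range (n + 1)).sup' nonempty_range_add_one fun u => ∑ k ∈ Ico u n, g k

lemma maxSuffixSum_nonneg (g : ℕ → ℝ) (n : ℕ) : 0 ≤ maxSuffixSum g n := by
  rw [maxSuffixSum]
  exact le_sup'_of_le _ (self_mem_range_succ n) (by simp)

lemma maxSuffixSum_add_le_succ (g : ℕ → ℝ) (n : ℕ) :
    maxSuffixSum g n + g n ≤ maxSuffixSum g (n + 1) := by
  rw [← le_sub_iff_add_le, maxSuffixSum, sup'_le_iff]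
  intro u hu
  rw [le_sub_iff_add_le, ← sum_Ico_succ_top (Nat.lt_succ_iff.mp (mem_range.mp hu))]
  exact le_sup' (fun u => ∑ k ∈ Ico u (n + 1), g k) (mem_range.mpr (by simp at hu; omega))

lemma le_mul_exp_maxSuffixSum {r g : ℕ → ℝ} {R M a : ℝ} {K : ℕ} (hR : 0 ≤ R) (hM : M ≤ R)
    (ha : 0 ≤ a) (h0 : r 0 ≤ R)
    (hstep : ∀ n < K, r n ≤ R * exp (n * a + maxSuffixSum g n) →
      r (n + 1) ≤ max M (r n * exp (a + g n))) :
    ∀ n ≤ K, r n ≤ R * exp (n * a + maxSuffixSum g n) := by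
  intro n
  induction n with
  | zero =>
    intro _
    simpa using h0.trans (le_mul_of_one_le_right hR (one_le_exp (maxSuffixSum_nonneg g 0)))
  | succ n ih =>
    intro hn
    have ihn := ih (by omega)
    have hS := maxSuffixSum_add_le_succ g n
    refine (hstep n (by omega) ihn).trans (max_le ?_ ?_)
    · exact hM.trans (le_mul_of_one_le_right hR
        (one_le_exp (by positivity [maxSuffixSum_nonneg g (n + 1)])))
    · calc r n * exp (a + g n) ≤ R * exp (n * a + maxSuffixSum g n) * exp (a + g n) := by gcongr
        _ = R * exp ((n * a + a) + (maxSuffixSum g n + g n)) := by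
          rw [mul_assoc, ← exp_add]; ring_nf
        _ ≤ R * exp (↑(n + 1) * a + maxSuffixSum g (n + 1)) := by
          gcongr; push_cast; linarith

lemma tamedEuler_constants_le {T c m₀ s lam : ℝ} (hT : 0 ≤ T) (hc : 0 ≤ c) (hm₀ : 0 ≤ m₀)
    (hs : 0 ≤ s) (hlam : lam = (1 + 2 * c + T + m₀ + s) ^ 4) :
    1 + (T * (c + m₀) + T ^ 2 * (m₀ + 2 * c) ^ 2) ≤ lam ∧ (c + s) ^ 2 ≤ lam ∧
      2 + c + s ≤ lam * exp 1 := by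
  set u := 2 * c + T + m₀ + s
  have hu : 0 ≤ u := by positivity
  have hlam' : lam = (1 + u) ^ 4 := by rw [hlam]; ring
  have hpow : 1 + u ≤ (1 + u) ^ 2 ∧ (1 + u) ^ 2 ≤ (1 + u) ^ 4 :=
    ⟨le_self_pow₀ (by linarith) two_ne_zero, pow_le_pow_right₀ (by linarith) (by norm_num)⟩
  refine ⟨?_, ?_, ?_⟩
  · have h1 : T * (c + m₀) ≤ u ^ 2 := by rw [sq]; gcongr <;> linarith
    have h2 : T ^ 2 * (m₀ + 2 * c) ^ 2 ≤ u ^ 4 := by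
      rw [← mul_pow, show u ^ 4 = (u * u) ^ 2 by ring]; gcongr <;> linarith
    rw [hlam']
    nlinarith [pow_nonneg hu 3]
  · calc (c + s) ^ 2 ≤ (1 + u) ^ 2 := pow_le_pow_left₀ (by positivity) (by linarith) 2
      _ ≤ lam := hlam' ▸ hpow.2
  · have he : 2 ≤ exp 1 := by linarith [add_one_le_exp 1]
    calc 2 + c + s ≤ (1 + u) * 2 := by linarith
      _ ≤ lam * exp 1 :=
        hlam' ▸ mul_le_mul (hpow.1.trans hpow.2) he zero_le_two (by positivity)

/-- Dominator lemma: pathwise domination of the tamed Euler scheme by the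
dominating process `D` on the event `Ω_n^N`. -/
theorem tamed_euler_dominator
    {Ω : Type*} (d m : ℕ) (T c : ℝ) (hT : 0 < T) (hc : 0 < c)
    (N : ℕ) (hN : 0 < N)
    (μ : EuclideanSpace ℝ (Fin d) → EuclideanSpace ℝ (Fin d))
    (hC1 : ContDiff ℝ 1 μ)
    (hμ' : ∀ x, ‖fderiv ℝ μ x‖ ≤ c * (1 + ‖x‖ ^ c))
    (hμos : ∀ x y, (inner ℝ (x - y) (μ x - μ y) : ℝ) ≤ c * ‖x - y‖^2)
    (σ : EuclideanSpace ℝ (Fin d) → (EuclideanSpace ℝ (Fin m) →L[ℝ] EuclideanSpace ℝ (Fin d)))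
    (hσ : ∀ x y, ‖σ x - σ y‖ ≤ c * ‖x - y‖)
    (lam : ℝ) (hlam : lam = (1 + 2*c + T + ‖μ 0‖ + ‖σ 0‖)^4)
    (ξ : Ω → EuclideanSpace ℝ (Fin d))
    (ΔW : ℕ → Ω → EuclideanSpace ℝ (Fin m))
    (Y : ℕ → Ω → EuclideanSpace ℝ (Fin d))
    (hY0 : ∀ ω, Y 0 ω = ξ ω)
    (hYrec : ∀ n ω, Y (n+1) ω = Y n ω
      + ((T / N) / (1 + (T / N) * ‖μ (Y n ω)‖)) • μ (Y n ω) + σ (Y n ω) (ΔW n ω))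
    (α : ℕ → Ω → ℝ)
    (hα : ∀ n ω, α n ω = if 1 ≤ ‖Y n ω‖ then
      (inner ℝ (‖Y n ω‖⁻¹ • Y n ω) (‖Y n ω‖⁻¹ • (σ (Y n ω) (ΔW n ω))) : ℝ) else 0)
    (D : ℕ → Ω → ℝ)
    (hD : ∀ n ω, D n ω = (lam + ‖ξ ω‖) * Real.exp (lam +
      (Finset.range (n+1)).sup' Finset.nonempty_range_add_one
        (fun u => ∑ k ∈ Finset.Ico u n, (lam * ‖ΔW k ω‖^2 + α k ω)))) :
    ∀ n ≤ N, ∀ ω : Ω,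
      (∀ k < n, D k ω ≤ (N : ℝ) ^ (1 / (2 * c)) ∧ ‖ΔW k ω‖ ≤ 1) →
      ‖Y n ω‖ ≤ D n ω := by
  intro n hn ω hev
  have hN' : (0 : ℝ) < N := Nat.cast_pos.mpr hN
  obtain ⟨hκ, hσlam, hM⟩ :=
    tamedEuler_constants_le hT.le hc.le (norm_nonneg (μ 0)) (norm_nonneg (σ 0)) hlam
  have hR : 0 ≤ lam + ‖ξ ω‖ := by
    linarith [norm_nonneg (ξ ω), show 0 ≤ lam by rw [hlam]; positivity]
  set κ := T * (c + ‖μ 0‖) + T ^ 2 * (‖μ 0‖ + 2 * c) ^ 2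
  set S := maxSuffixSum fun k => lam * ‖ΔW k ω‖ ^ 2 + α k ω
  have hdom : ∀ k ≤ N, (lam + ‖ξ ω‖) * exp 1 * exp (k * (κ / N) + S k) ≤ D k ω := by
    intro k hk
    have hkκ : k * (κ / N) ≤ κ := by
      rw [mul_div_assoc', div_le_iff₀ hN', mul_comm]
      gcongr
    rw [hD, mul_assoc, ← exp_add]
    change _ ≤ _ * exp (lam + S k)
    exact mul_le_mul_of_nonneg_left (exp_le_exp.mpr (by linarith)) hR
  refine (le_mul_exp_maxSuffixSum (r := fun k => ‖Y k ω‖) (M := 2 + c + ‖σ 0‖) (by positivity)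
    (hM.trans (by gcongr; linarith [norm_nonneg (ξ ω)])) (by positivity) ?_ ?_ n le_rfl).trans
    (hdom n hn)
  · show ‖Y 0 ω‖ ≤ (lam + ‖ξ ω‖) * exp 1
    rw [hY0]
    nlinarith [add_one_le_exp 1, norm_nonneg (ξ ω)]
  · intro k hk ih
    simp only [hYrec, hα]
    exact norm_add_tamed_add_le hT.le hc hN' (hC1.differentiable one_ne_zero) hμ' hμos hσ hσlam
      ((ih.trans (hdom k (by omega))).trans (hev k hk).1) (hev k hk).2
end

section
/- Let α_n^N := 1_{‖Y_n^N‖≥1}⟨Y_n^N/‖Y_n^N‖, (σ(Y_n^N)/‖Y_n^N‖)ΔW_n^N⟩ be the martingale increments associated with the tamed Euler scheme. Then for every p ∈ [1,∞), sup over z ∈ {-1,1} and N ∈ ℕ of E[ sup_{n∈{0,…,N}} exp(p z ∑_{k=0}^{n-1} α_k^N) ] is finite; in fact it is bounded by 2^p exp(4 p³ T (c+‖σ(0)‖)²) for p ≥ 2. -/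
/-!
Write `α_k = ⟪a(Y_k), ΔW_k⟫` with `a(y) = 1_{‖y‖ ≥ 1} σ(y)* y / ‖y‖²`; Lipschitz continuity of `σ`
gives `‖a‖ ≤ L := c + ‖σ 0‖`. Since `ΔW_k` is a centred Gaussian vector of variance `T/N`
independent of `F_k`, for all `F_k`-measurable `G ≥ 0` and `V`
`E[G exp⟪V, ΔW_k⟫] = E[G exp(T ‖V‖² / (2N))]`.
Taking `V = θ a(Y_k)` with `θ = pz/2`, the process `x_n = exp(θ ∑_{k<n} α_k)` is a positive
submartingale with `E[x_N²] ≤ exp(p² L² T / 2)`, and Doob's `L²` maximal inequality yields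
`E[max_n x_n²] ≤ 4 exp(p² L² T / 2) ≤ 2^p exp(4 p³ T L²)`.

Doob's inequality is obtained from the pathwise inequality, valid for any real sequence with
running maximum `M_n`,
`M_N² + 4 ∑_{k<N} M_k x_{k+1} ≤ 4 (x_N² + ∑_{k<N} M_k x_k)`,
since the submartingale property gives `E[M_k x_k] ≤ E[M_k x_{k+1}]`.
-/

open MeasureTheory ProbabilityTheory Finset Real
open scoped NNReal ENNReal InnerProductSpace

lemma partialSups_sq_add_sum_le (x : ℕ → ℝ) (N : ℕ) :
    partialSups x N ^ 2 + 4 * ∑ k ∈ range N, partialSups x k * x (k + 1)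
      ≤ 4 * (x N ^ 2 + ∑ k ∈ range N, partialSups x k * x k) := by
  have step : ∀ n, partialSups x n ^ 2 / 2 + ∑ k ∈ range n, partialSups x k * x (k + 1)
      ≤ partialSups x n * x n + ∑ k ∈ range n, partialSups x k * x k := by
    intro n
    induction n with
    | zero => simp only [partialSups_zero, range_zero, sum_empty]; nlinarith
    | succ n ih =>
      rw [sum_range_succ, sum_range_succ, partialSups_add_one]
      rcases le_total (x (n + 1)) (partialSups x n) with h | h
      · rw [sup_eq_left.mpr h]; nlinarith
      · rw [sup_eq_right.mpr h]; nlinarith [sq_nonneg (x (n + 1) - partialSups x n)]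
  nlinarith [step N, sq_nonneg (partialSups x N - 2 * x N)]

lemma ofReal_partialSups_sq_add_sum_le {x : ℕ → ℝ} (hx : ∀ n, 0 ≤ x n) (N : ℕ) :
    ENNReal.ofReal (partialSups x N ^ 2)
        + 4 * ∑ k ∈ range N, ENNReal.ofReal (partialSups x k) * ENNReal.ofReal (x (k + 1))
      ≤ 4 * (ENNReal.ofReal (x N ^ 2)
        + ∑ k ∈ range N, ENNReal.ofReal (partialSups x k) * ENNReal.ofReal (x k)) := by
  have hM : ∀ k, 0 ≤ partialSups x k := fun k => (hx k).trans (le_partialSups x k)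
  have hsum0 : ∀ y : ℕ → ℝ, (∀ k, 0 ≤ y k) → 0 ≤ ∑ k ∈ range N, partialSups x k * y k :=
    fun y hy => sum_nonneg fun k _ => mul_nonneg (hM k) (hy k)
  have hsum : ∀ y : ℕ → ℝ, (∀ k, 0 ≤ y k) →
      ENNReal.ofReal (∑ k ∈ range N, partialSups x k * y k)
        = ∑ k ∈ range N, ENNReal.ofReal (partialSups x k) * ENNReal.ofReal (y k) := fun y hy => by
    rw [ENNReal.ofReal_sum_of_nonneg fun k _ => mul_nonneg (hM k) (hy k)]
    exact sum_congr rfl fun k _ => ENNReal.ofReal_mul (hM k)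
  have h := ENNReal.ofReal_le_ofReal (partialSups_sq_add_sum_le x N)
  rwa [ENNReal.ofReal_add (sq_nonneg _) (mul_nonneg zero_le_four (hsum0 _ (hx <| · + 1))),
    ENNReal.ofReal_mul zero_le_four, ENNReal.ofReal_mul zero_le_four,
    ENNReal.ofReal_add (sq_nonneg _) (hsum0 _ hx), ENNReal.ofReal_ofNat,
    hsum _ (hx <| · + 1), hsum _ hx] at h

lemma partialSups_mul_le_sum_sq {x : ℕ → ℝ} (hx : ∀ n, 0 ≤ x n) {k N : ℕ} (hk : k < N) :
    partialSups x k * x (k + 1) ≤ ∑ j ∈ range (N + 1), x j ^ 2 := by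
  obtain ⟨j, hj, hxj⟩ := exists_partialSups_eq x (k + 1)
  calc partialSups x k * x (k + 1) ≤ partialSups x (k + 1) ^ 2 := by
        rw [sq]
        exact mul_le_mul (partialSups_monotone x k.le_succ) (le_partialSups x _) (hx _)
          ((hx _).trans (le_partialSups x _))
    _ = x j ^ 2 := by rw [hxj]
    _ ≤ _ := single_le_sum (fun i _ => sq_nonneg (x i)) (mem_range.2 (by omega))

lemma partialSups_sq {x : ℕ → ℝ} (hx : ∀ n, 0 ≤ x n) (N : ℕ) :
    partialSups (fun n => x n ^ 2) N = partialSups x N ^ 2 := by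
  induction N with
  | zero => simp
  | succ N ih =>
    rw [partialSups_add_one, partialSups_add_one, ih]
    exact ((pow_left_monotoneOn (n := 2)).map_max ((hx N).trans (le_partialSups x N))
      (hx (N + 1))).symm

lemma measurable_partialSups_of_adapted {Ω α : Type*} {mΩ : MeasurableSpace Ω}
    [SemilatticeSup α] [MeasurableSpace α] [MeasurableSup₂ α]
    (ℱ : Filtration ℕ mΩ) {x : ℕ → Ω → α} (hx : ∀ n, Measurable[ℱ n] (x n)) (n : ℕ) :
    Measurable[ℱ n] fun ω => partialSups (x · ω) n := by
  induction n with
  | zero => simpa using hx 0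
  | succ n ih =>
    simp only [partialSups_add_one]
    exact (ih.mono (ℱ.mono n.le_succ) le_rfl).sup (hx (n + 1))

theorem lintegral_partialSups_sq_le {Ω : Type*} {mΩ : MeasurableSpace Ω} {μ : Measure Ω}
    (ℱ : Filtration ℕ mΩ) {x : ℕ → Ω → ℝ} (hx0 : ∀ n ω, 0 ≤ x n ω)
    (hx : ∀ n, Measurable[ℱ n] (x n))
    (hsub : ∀ k (G : Ω → ℝ≥0∞), Measurable[ℱ k] G →
      ∫⁻ ω, G ω * ENNReal.ofReal (x k ω) ∂μ ≤ ∫⁻ ω, G ω * ENNReal.ofReal (x (k + 1) ω) ∂μ)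
    (hL2 : ∀ n, ∫⁻ ω, ENNReal.ofReal (x n ω ^ 2) ∂μ ≠ ∞) (N : ℕ) :
    ∫⁻ ω, ENNReal.ofReal (partialSups (x · ω) N ^ 2) ∂μ
      ≤ 4 * ∫⁻ ω, ENNReal.ofReal (x N ω ^ 2) ∂μ := by
  set M : ℕ → Ω → ℝ := fun n ω => partialSups (x · ω) n
  have hM : ∀ n, Measurable[ℱ n] (M n) := measurable_partialSups_of_adapted ℱ hx
  have hM' : ∀ n, Measurable (M n) := fun n => (hM n).mono (ℱ.le n) le_rfl
  have hx' : ∀ n, Measurable (x n) := fun n => (hx n).mono (ℱ.le n) le_rfl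
  set A : ℕ → ℝ≥0∞ := fun k => ∫⁻ ω, ENNReal.ofReal (M k ω) * ENNReal.ofReal (x k ω) ∂μ
  set B : ℕ → ℝ≥0∞ := fun k => ∫⁻ ω, ENNReal.ofReal (M k ω) * ENNReal.ofReal (x (k + 1) ω) ∂μ
  have integrated : ∫⁻ ω, ENNReal.ofReal (M N ω ^ 2) ∂μ + 4 * ∑ k ∈ range N, B k
      ≤ 4 * ∫⁻ ω, ENNReal.ofReal (x N ω ^ 2) ∂μ + 4 * ∑ k ∈ range N, B k := by
    calc _ = ∫⁻ ω, ENNReal.ofReal (M N ω ^ 2)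
            + 4 * ∑ k ∈ range N, ENNReal.ofReal (M k ω) * ENNReal.ofReal (x (k + 1) ω) ∂μ := by
          rw [lintegral_add_left (by fun_prop), lintegral_const_mul _ (by fun_prop),
            lintegral_finsetSum _ (by fun_prop)]
      _ ≤ ∫⁻ ω, 4 * (ENNReal.ofReal (x N ω ^ 2)
            + ∑ k ∈ range N, ENNReal.ofReal (M k ω) * ENNReal.ofReal (x k ω)) ∂μ :=
          lintegral_mono fun ω => ofReal_partialSups_sq_add_sum_le (hx0 · ω) N
      _ = 4 * (∫⁻ ω, ENNReal.ofReal (x N ω ^ 2) ∂μ + ∑ k ∈ range N, A k) := by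
          rw [lintegral_const_mul _ (by fun_prop), lintegral_add_left (by fun_prop),
            lintegral_finsetSum _ (by fun_prop)]
      _ ≤ _ := by
          rw [← mul_add]
          gcongr with k
          exact hsub k _ (hM k).ennreal_ofReal
  have hB : ∀ k ∈ range N, B k ≠ ∞ := by
    intro k hk
    refine ne_top_of_le_ne_top (ENNReal.sum_ne_top.2 fun j (_ : j ∈ range (N + 1)) => hL2 j) ?_
    rw [← lintegral_finsetSum _ fun j _ => by fun_prop]
    refine lintegral_mono fun ω => ?_
    rw [← ENNReal.ofReal_mul ((hx0 0 ω).trans (le_partialSups_of_le (x · ω) k.zero_le)),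
      ← ENNReal.ofReal_sum_of_nonneg fun j _ => sq_nonneg _]
    exact ENNReal.ofReal_le_ofReal (partialSups_mul_le_sum_sq (hx0 · ω) (mem_range.1 hk))
  exact ENNReal.le_of_add_le_add_right
    (ENNReal.mul_ne_top ENNReal.ofNat_ne_top (ENNReal.sum_ne_top.2 hB)) integrated

noncomputable def isotropicGaussian (ι : Type*) [Fintype ι] (s : ℝ≥0) :
    Measure (EuclideanSpace ℝ ι) :=
  (Measure.pi fun _ : ι => gaussianReal 0 s).map (WithLp.toLp 2)

theorem lintegral_exp_inner_isotropicGaussian {ι : Type*} [Fintype ι] (s : ℝ≥0)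
    (v : EuclideanSpace ℝ ι) :
    ∫⁻ w, ENNReal.ofReal (exp ⟪v, w⟫_ℝ) ∂(isotropicGaussian ι s)
      = ENNReal.ofReal (exp (s * ‖v‖ ^ 2 / 2)) := by
  have hprod : ∀ w : ι → ℝ, exp ⟪v, WithLp.toLp 2 w⟫_ℝ = ∏ i, exp (v i * w i) := fun w => by
    rw [← exp_sum]
    simp [PiLp.inner_apply, mul_comm]
  have hmgf : ∀ i, ∫ x, exp (v i * x) ∂(gaussianReal 0 s) = exp (s * v i ^ 2 / 2) := fun i => by
    simpa [mgf] using congrFun (mgf_fun_id_gaussianReal (μ := 0) (v := s)) (v i)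
  rw [isotropicGaussian, lintegral_map (by fun_prop) (by fun_prop)]
  simp_rw [hprod]
  rw [← ofReal_integral_eq_lintegral_ofReal
      (Integrable.fintype_prod fun i => integrable_exp_mul_gaussianReal (v i))
      (ae_of_all _ fun w => by positivity),
    integral_fintype_prod_eq_prod (fun i x => exp (v i * x))]
  simp_rw [hmgf, ← exp_sum, EuclideanSpace.real_norm_sq_eq, mul_sum, sum_div]

theorem ProbabilityTheory.IndepFun.lintegral_comp_eq_lintegral_lintegral_map
    {Ω β γ : Type*} {mΩ : MeasurableSpace Ω} {P : Measure Ω} [IsFiniteMeasure P]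
    [MeasurableSpace β] [MeasurableSpace γ] {Z : Ω → β} {W : Ω → γ} (h : IndepFun Z W P)
    (hZ : Measurable Z) (hW : Measurable W) {f : β × γ → ℝ≥0∞} (hf : Measurable f) :
    ∫⁻ ω, f (Z ω, W ω) ∂P = ∫⁻ ω, ∫⁻ w, f (Z ω, w) ∂(P.map W) ∂P := by
  rw [← lintegral_map hf (hZ.prodMk hW),
    (indepFun_iff_map_prod_eq_prod_map_map hZ.aemeasurable hW.aemeasurable).mp h,
    lintegral_prod _ hf.aemeasurable, lintegral_map _ hZ]
  exact hf.lintegral_prod_right'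

section ConditionalGaussian

variable {Ω ι : Type*} [Fintype ι] {m mΩ : MeasurableSpace Ω} {P : Measure Ω}
  [IsFiniteMeasure P] {G : Ω → ℝ≥0∞} {V W : Ω → EuclideanSpace ℝ ι} {s : ℝ≥0}

theorem lintegral_mul_exp_inner_eq_of_indep (hm : m ≤ mΩ) (hG : Measurable[m] G)
    (hV : Measurable[m] V) (hW : Measurable W)
    (hindep : Indep (MeasurableSpace.comap W inferInstance) m P)
    (hlaw : P.map W = isotropicGaussian ι s) :
    ∫⁻ ω, G ω * ENNReal.ofReal (exp ⟪V ω, W ω⟫_ℝ) ∂P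
      = ∫⁻ ω, G ω * ENNReal.ofReal (exp (s * ‖V ω‖ ^ 2 / 2)) ∂P := by
  have hGV : Measurable[m] fun ω => (G ω, V ω) := hG.prodMk hV
  have hind : IndepFun (fun ω => (G ω, V ω)) W P :=
    (indep_of_indep_of_le_right hindep hGV.comap_le).symm
  rw [hind.lintegral_comp_eq_lintegral_lintegral_map (hGV.mono hm le_rfl) hW
    (f := fun q => q.1.1 * ENNReal.ofReal (exp ⟪q.1.2, q.2⟫_ℝ)) (by fun_prop), hlaw]
  refine lintegral_congr fun ω => ?_
  rw [lintegral_const_mul _ (by fun_prop), lintegral_exp_inner_isotropicGaussian]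

theorem lintegral_mul_exp_inner_le_of_indep (hm : m ≤ mΩ) (hG : Measurable[m] G)
    (hV : Measurable[m] V) (hW : Measurable W)
    (hindep : Indep (MeasurableSpace.comap W inferInstance) m P)
    (hlaw : P.map W = isotropicGaussian ι s) {L : ℝ} (hL : ∀ ω, ‖V ω‖ ≤ L) :
    ∫⁻ ω, G ω * ENNReal.ofReal (exp ⟪V ω, W ω⟫_ℝ) ∂P
      ≤ ENNReal.ofReal (exp (s * L ^ 2 / 2)) * ∫⁻ ω, G ω ∂P := by
  rw [lintegral_mul_exp_inner_eq_of_indep hm hG hV hW hindep hlaw,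
    ← lintegral_const_mul' _ _ ENNReal.ofReal_ne_top]
  refine lintegral_mono fun ω => ?_
  rw [mul_comm]
  gcongr
  exact hL ω

theorem lintegral_le_lintegral_mul_exp_inner_of_indep (hm : m ≤ mΩ) (hG : Measurable[m] G)
    (hV : Measurable[m] V) (hW : Measurable W)
    (hindep : Indep (MeasurableSpace.comap W inferInstance) m P)
    (hlaw : P.map W = isotropicGaussian ι s) :
    ∫⁻ ω, G ω ∂P ≤ ∫⁻ ω, G ω * ENNReal.ofReal (exp ⟪V ω, W ω⟫_ℝ) ∂P := by
  rw [lintegral_mul_exp_inner_eq_of_indep hm hG hV hW hindep hlaw]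
  refine lintegral_mono fun ω => le_mul_of_one_le_right' ?_
  exact ENNReal.one_le_ofReal.2 (one_le_exp (by positivity))

end ConditionalGaussian

section GaussianTransform

variable {Ω ι : Type*} [Fintype ι] {mΩ : MeasurableSpace Ω} {P : Measure Ω}
  {ℱ : Filtration ℕ mΩ} {V W : ℕ → Ω → EuclideanSpace ℝ ι} {s : ℝ≥0}

structure IsGaussianIncrements (ℱ : Filtration ℕ mΩ) (W : ℕ → Ω → EuclideanSpace ℝ ι)
    (s : ℝ≥0) (P : Measure Ω) : Prop where
  measurable : ∀ k, Measurable[ℱ (k + 1)] (W k)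
  indep : ∀ k, Indep (MeasurableSpace.comap (W k) inferInstance) (ℱ k) P
  map_eq : ∀ k, P.map (W k) = isotropicGaussian ι s

theorem measurable_sum_inner (hV : ∀ k, Measurable[ℱ k] (V k))
    (hW : ∀ k, Measurable[ℱ (k + 1)] (W k)) (n : ℕ) :
    Measurable[ℱ n] fun ω => ∑ k ∈ range n, ⟪V k ω, W k ω⟫_ℝ :=
  Finset.measurable_sum _ fun k hk =>
    ((hV k).mono (ℱ.mono (mem_range.1 hk).le) le_rfl).inner
      ((hW k).mono (ℱ.mono (mem_range.1 hk)) le_rfl)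

variable [IsProbabilityMeasure P]

theorem lintegral_exp_sum_inner_le (hV : ∀ k, Measurable[ℱ k] (V k))
    (hW : IsGaussianIncrements ℱ W s P) {L : ℝ} (hL : ∀ k ω, ‖V k ω‖ ≤ L) (n : ℕ) :
    ∫⁻ ω, ENNReal.ofReal (exp (∑ k ∈ range n, ⟪V k ω, W k ω⟫_ℝ)) ∂P
      ≤ ENNReal.ofReal (exp (n * (s * L ^ 2 / 2))) := by
  induction n with
  | zero => simp
  | succ n ih =>
    simp_rw [sum_range_succ, exp_add, ENNReal.ofReal_mul (exp_nonneg _)]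
    calc _ ≤ ENNReal.ofReal (exp (s * L ^ 2 / 2))
          * ∫⁻ ω, ENNReal.ofReal (exp (∑ k ∈ range n, ⟪V k ω, W k ω⟫_ℝ)) ∂P :=
          lintegral_mul_exp_inner_le_of_indep (ℱ.le n)
            (measurable_sum_inner hV hW.measurable n).exp.ennreal_ofReal (hV n)
            ((hW.measurable n).mono (ℱ.le _) le_rfl) (hW.indep n) (hW.map_eq n) (hL n)
      _ ≤ ENNReal.ofReal (exp (s * L ^ 2 / 2)) * ENNReal.ofReal (exp (n * (s * L ^ 2 / 2))) := by
          gcongr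
      _ = _ := by
          rw [← ENNReal.ofReal_mul (exp_nonneg _), ← exp_add]
          push_cast
          ring_nf

theorem lintegral_partialSups_exp_sum_inner_sq_le (hV : ∀ k, Measurable[ℱ k] (V k))
    (hW : IsGaussianIncrements ℱ W s P) {L : ℝ} (hL : ∀ k ω, ‖V k ω‖ ≤ L) (N : ℕ) :
    ∫⁻ ω, ENNReal.ofReal (partialSups (fun n => exp (∑ k ∈ range n, ⟪V k ω, W k ω⟫_ℝ)) N ^ 2) ∂P
      ≤ 4 * ENNReal.ofReal (exp (2 * N * s * L ^ 2)) := by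
  have hsq : ∀ n ω, exp (∑ k ∈ range n, ⟪V k ω, W k ω⟫_ℝ) ^ 2
      = exp (∑ k ∈ range n, ⟪(2 : ℝ) • V k ω, W k ω⟫_ℝ) := fun n ω => by
    simp_rw [real_inner_smul_left, ← mul_sum, ← exp_nat_mul]
    norm_num
  have hmom : ∀ n, ∫⁻ ω, ENNReal.ofReal (exp (∑ k ∈ range n, ⟪V k ω, W k ω⟫_ℝ) ^ 2) ∂P
      ≤ ENNReal.ofReal (exp (2 * n * s * L ^ 2)) := fun n => by
    simp_rw [hsq]
    convert lintegral_exp_sum_inner_le (V := fun k ω => (2 : ℝ) • V k ω)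
      (fun k => (hV k).const_smul (2 : ℝ)) hW (L := 2 * L)
      (fun k ω => by rw [norm_smul, Real.norm_two]; linarith [hL k ω]) n using 3
    ring
  have hsub : ∀ k (G : Ω → ℝ≥0∞), Measurable[ℱ k] G →
      ∫⁻ ω, G ω * ENNReal.ofReal (exp (∑ j ∈ range k, ⟪V j ω, W j ω⟫_ℝ)) ∂P
        ≤ ∫⁻ ω, G ω * ENNReal.ofReal (exp (∑ j ∈ range (k + 1), ⟪V j ω, W j ω⟫_ℝ)) ∂P := by
    intro k G hG
    simp_rw [sum_range_succ, exp_add, ENNReal.ofReal_mul (exp_nonneg _), ← mul_assoc]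
    exact lintegral_le_lintegral_mul_exp_inner_of_indep (ℱ.le k)
      (hG.mul (measurable_sum_inner hV hW.measurable k).exp.ennreal_ofReal) (hV k)
      ((hW.measurable k).mono (ℱ.le _) le_rfl) (hW.indep k) (hW.map_eq k)
  calc _ ≤ 4 * ∫⁻ ω, ENNReal.ofReal (exp (∑ k ∈ range N, ⟪V k ω, W k ω⟫_ℝ) ^ 2) ∂P :=
        lintegral_partialSups_sq_le ℱ (fun _ _ => (exp_pos _).le)
          (fun n => (measurable_sum_inner hV hW.measurable n).exp) hsub
          (fun n => ne_top_of_le_ne_top ENNReal.ofReal_ne_top (hmom n)) N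
    _ ≤ _ := by gcongr; exact hmom N

theorem integral_sup_exp_two_mul_sum_inner_le (hV : ∀ k, Measurable[ℱ k] (V k))
    (hW : IsGaussianIncrements ℱ W s P) {L : ℝ} (hL : ∀ k ω, ‖V k ω‖ ≤ L) (N : ℕ) :
    ∫ ω, (range (N + 1)).sup' nonempty_range_add_one
        (fun n => exp (2 * ∑ k ∈ range n, ⟪V k ω, W k ω⟫_ℝ)) ∂P
      ≤ 4 * exp (2 * N * s * L ^ 2) := by
  have hsup : ∀ ω, (range (N + 1)).sup' nonempty_range_add_one
      (fun n => exp (2 * ∑ k ∈ range n, ⟪V k ω, W k ω⟫_ℝ))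
        = partialSups (fun n => exp (∑ k ∈ range n, ⟪V k ω, W k ω⟫_ℝ)) N ^ 2 := fun ω => by
    rw [← partialSups_eq_sup'_range, ← partialSups_sq fun n => (exp_pos _).le]
    simp_rw [← exp_nat_mul, Nat.cast_ofNat]
  have hmeas : Measurable fun ω =>
      partialSups (fun n => exp (∑ k ∈ range n, ⟪V k ω, W k ω⟫_ℝ)) N ^ 2 :=
    ((measurable_partialSups_of_adapted ℱ
      (fun n => (measurable_sum_inner hV hW.measurable n).exp) N).mono (ℱ.le N) le_rfl).pow_const 2
  simp_rw [hsup]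
  rw [integral_eq_lintegral_of_nonneg_ae (ae_of_all _ fun ω => sq_nonneg _)
    hmeas.aestronglyMeasurable]
  refine ENNReal.toReal_le_of_le_ofReal (by positivity) ?_
  rw [ENNReal.ofReal_mul zero_le_four, ENNReal.ofReal_ofNat]
  exact lintegral_partialSups_exp_sum_inner_sq_le hV hW hL N

end GaussianTransform

section AlphaCoeff

variable {E F : Type*} [NormedAddCommGroup E] [InnerProductSpace ℝ E] [CompleteSpace E]
  [NormedAddCommGroup F] [InnerProductSpace ℝ F] [CompleteSpace F]

noncomputable def alphaCoeff (σ : E → F →L[ℝ] E) (y : E) : F :=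
  if 1 ≤ ‖y‖ then (‖y‖ ^ 2)⁻¹ • ContinuousLinearMap.adjoint (σ y) y else 0

lemma inner_alphaCoeff (σ : E → F →L[ℝ] E) (y : E) (w : F) :
    ⟪alphaCoeff σ y, w⟫_ℝ = if 1 ≤ ‖y‖ then ⟪‖y‖⁻¹ • y, ‖y‖⁻¹ • σ y w⟫_ℝ else 0 := by
  unfold alphaCoeff
  split_ifs
  · rw [real_inner_smul_left, ContinuousLinearMap.adjoint_inner_left, real_inner_smul_left,
      real_inner_smul_right, sq, mul_inv, mul_assoc]
  · exact inner_zero_left _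

lemma norm_alphaCoeff_le {σ : E → F →L[ℝ] E} {c : ℝ} (hc : 0 ≤ c)
    (hσ : ∀ y, ‖σ y - σ 0‖ ≤ c * ‖y‖) (y : E) :
    ‖alphaCoeff σ y‖ ≤ c + ‖σ 0‖ := by
  unfold alphaCoeff
  split_ifs with hy
  · have hy0 : 0 < ‖y‖ := one_pos.trans_le hy
    have hgrowth : ‖σ y‖ ≤ c * ‖y‖ + ‖σ 0‖ := by
      linarith [norm_le_norm_sub_add (σ y) (σ 0), hσ y]
    calc ‖(‖y‖ ^ 2)⁻¹ • ContinuousLinearMap.adjoint (σ y) y‖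
        ≤ (‖y‖ ^ 2)⁻¹ * (‖σ y‖ * ‖y‖) := by
          rw [norm_smul, norm_inv, norm_pow, norm_norm]
          gcongr
          exact ((ContinuousLinearMap.adjoint (σ y)).le_opNorm y).trans_eq
            (by rw [LinearIsometryEquiv.norm_map])
      _ = ‖σ y‖ / ‖y‖ := by field_simp
      _ ≤ c + ‖σ 0‖ := by
          rw [div_le_iff₀ hy0]
          nlinarith [norm_nonneg (σ 0)]
  · rw [norm_zero]
    positivity

lemma measurable_alphaCoeff [MeasurableSpace E] [BorelSpace E] [MeasurableSpace F] [BorelSpace F]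
    {σ : E → F →L[ℝ] E} (hσ : Continuous σ) : Measurable (alphaCoeff σ) := by
  have hadj : Continuous fun y => ContinuousLinearMap.adjoint (σ y) y :=
    (ContinuousLinearMap.adjoint.continuous.comp hσ).clm_apply continuous_id
  exact Measurable.ite (measurableSet_le measurable_const measurable_norm)
    ((measurable_norm.pow_const 2).inv.smul hadj.measurable) measurable_const

end AlphaCoeff

theorem integral_sup_exp_mul_sum_inner_alphaCoeff_le {Ω ι E : Type*} [Fintype ι]
    [NormedAddCommGroup E] [InnerProductSpace ℝ E] [CompleteSpace E] [MeasurableSpace E]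
    [BorelSpace E] {mΩ : MeasurableSpace Ω} {P : Measure Ω} [IsProbabilityMeasure P]
    {ℱ : Filtration ℕ mΩ} {Y : ℕ → Ω → E} {W : ℕ → Ω → EuclideanSpace ℝ ι} {s : ℝ≥0}
    (hY : ∀ k, Measurable[ℱ k] (Y k)) (hW : IsGaussianIncrements ℱ W s P)
    {σ : E → EuclideanSpace ℝ ι →L[ℝ] E} (hσ : Continuous σ) {c : ℝ} (hc : 0 ≤ c)
    (hgrowth : ∀ y, ‖σ y - σ 0‖ ≤ c * ‖y‖) (θ : ℝ) (N : ℕ) :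
    ∫ ω, (range (N + 1)).sup' nonempty_range_add_one
        (fun n => exp (2 * θ * ∑ k ∈ range n, ⟪alphaCoeff σ (Y k ω), W k ω⟫_ℝ)) ∂P
      ≤ 4 * exp (2 * N * s * (|θ| * (c + ‖σ 0‖)) ^ 2) := by
  have h := integral_sup_exp_two_mul_sum_inner_le (V := fun k ω => θ • alphaCoeff σ (Y k ω))
    (fun k => ((measurable_alphaCoeff hσ).comp (hY k)).const_smul θ) hW
    (L := |θ| * (c + ‖σ 0‖)) (fun k ω => by
      rw [norm_smul, Real.norm_eq_abs]
      gcongr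
      exact norm_alphaCoeff_le hc hgrowth _) N
  simp_rw [real_inner_smul_left, ← mul_sum, ← mul_assoc] at h
  exact h

/-- Maximal exponential moment bound for the martingale increments `α_n^N` associated
with the tamed Euler scheme. -/
theorem exp_moment_sup_martingale_alpha
    {Ω : Type*} [MeasurableSpace Ω] (P : Measure Ω) [IsProbabilityMeasure P]
    (d m : ℕ) (T c : ℝ) (hT : 0 < T) (hc : 0 < c)
    (σ : EuclideanSpace ℝ (Fin d) → (EuclideanSpace ℝ (Fin m) →L[ℝ] EuclideanSpace ℝ (Fin d)))
    (hσ : ∀ x y, ‖σ x - σ y‖ ≤ c * ‖x - y‖)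
    (ℱ : ℕ → ℕ → MeasurableSpace Ω)
    (hℱmono : ∀ N, Monotone (ℱ N))
    (hℱle : ∀ N n, ℱ N n ≤ ‹MeasurableSpace Ω›)
    (Y : ℕ → ℕ → Ω → EuclideanSpace ℝ (Fin d))
    (hYmeas : ∀ N n, Measurable[ℱ N n] (Y N n))
    (ΔW : ℕ → ℕ → Ω → EuclideanSpace ℝ (Fin m))
    (hWmeas : ∀ N n, Measurable[ℱ N (n+1)] (ΔW N n))
    (hWindep : ∀ N n, Indep (MeasurableSpace.comap (ΔW N n) inferInstance) (ℱ N n) P)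
    (hWlaw : ∀ N, 1 ≤ N → ∀ n,
      Measure.map (ΔW N n) P =
        Measure.map (WithLp.toLp 2) (Measure.pi (fun _ : Fin m => gaussianReal 0 (T / N).toNNReal)))
    (α : ℕ → ℕ → Ω → ℝ)
    (hα : ∀ N n ω, α N n ω = if 1 ≤ ‖Y N n ω‖ then
      (inner ℝ (‖Y N n ω‖⁻¹ • Y N n ω) (‖Y N n ω‖⁻¹ • (σ (Y N n ω) (ΔW N n ω))) : ℝ) else 0) :
    ∀ p : ℝ, 1 ≤ p →
      (∃ C : ℝ, ∀ z : ℝ, (z = -1 ∨ z = 1) → ∀ N : ℕ, 1 ≤ N →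
        (∫ ω, (Finset.range (N+1)).sup' Finset.nonempty_range_add_one
          (fun n => Real.exp (p * z * ∑ k ∈ Finset.range n, α N k ω)) ∂P) ≤ C) ∧
      (2 ≤ p → ∀ z : ℝ, (z = -1 ∨ z = 1) → ∀ N : ℕ, 1 ≤ N →
        (∫ ω, (Finset.range (N+1)).sup' Finset.nonempty_range_add_one
          (fun n => Real.exp (p * z * ∑ k ∈ Finset.range n, α N k ω)) ∂P)
        ≤ 2 ^ p * Real.exp (4 * p^3 * T * (c + ‖σ 0‖)^2)) := by
  intro p _
  have hσcont : Continuous σ :=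
    (LipschitzWith.of_dist_le' fun x y => by simpa only [dist_eq_norm] using hσ x y).continuous
  have key : ∀ z : ℝ, (z = -1 ∨ z = 1) → ∀ N : ℕ, 1 ≤ N →
      ∫ ω, (range (N + 1)).sup' nonempty_range_add_one
        (fun n => exp (p * z * ∑ k ∈ range n, α N k ω)) ∂P
        ≤ 4 * exp (p ^ 2 * T * (c + ‖σ 0‖) ^ 2 / 2) := by
    intro z hz N hN
    have hz_abs : |z| = 1 := by rcases hz with rfl | rfl <;> norm_num
    have hαsum : ∀ n ω, p * z * ∑ k ∈ range n, α N k ω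
        = 2 * (p * z / 2) * ∑ k ∈ range n, ⟪alphaCoeff σ (Y N k ω), ΔW N k ω⟫_ℝ := by
      simp_rw [inner_alphaCoeff, ← hα]
      intros
      ring
    simp_rw [hαsum]
    refine (integral_sup_exp_mul_sum_inner_alphaCoeff_le (ℱ := ⟨ℱ N, hℱmono N, hℱle N⟩)
      (hYmeas N) ⟨hWmeas N, hWindep N, hWlaw N hN⟩ hσcont hc.le (fun y => by simpa using hσ y 0)
      (p * z / 2) N).trans_eq ?_
    rw [Real.coe_toNNReal _ (by positivity), abs_div, abs_mul, hz_abs, mul_one, abs_two, mul_pow,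
      div_pow, sq_abs]
    field_simp
  refine ⟨⟨_, key⟩, fun hp2 z hz N hN => (key z hz N hN).trans ?_⟩
  have h4 : (4 : ℝ) ≤ 2 ^ p :=
    calc (4 : ℝ) = 2 ^ (2 : ℝ) := by norm_num
      _ ≤ 2 ^ p := Real.rpow_le_rpow_of_exponent_le one_le_two hp2
  have hexp : p ^ 2 * T * (c + ‖σ 0‖) ^ 2 / 2 ≤ 4 * p ^ 3 * T * (c + ‖σ 0‖) ^ 2 := by
    have := mul_nonneg (mul_nonneg (mul_nonneg hT.le (sq_nonneg (c + ‖σ 0‖))) (sq_nonneg p))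
      (by linarith : (0 : ℝ) ≤ 4 * p - 1 / 2)
    linarith
  gcongr
end
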